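/- arXiv:1507.04989 — 3 statements merged into one kernel-verified Lean document; each statement's English description precedes it below -/
import Mathlib

section
/- Let I ≥ 1, let B be a nonempty set, and let h : B → ℝ^I be a bounded family of vectors (i.e. there exists C with |h(β)_i| ≤ C for all β ∈ B and all i). Define F : ℝ^I → ℝ by F(p̄) = inf_{β ∈ B} max_{1 ≤ i ≤ I} (p̄_i − h(β)_i). Then for every p in the standard simplex Δ(I) = {p ∈ ℝ^I : p_i ≥ 0, ∑_i p_i = 1}, the convex conjugate sup_{p̄ ∈ ℝ^I} ( ⟨p, p̄⟩ − F(p̄) ) equals sup_{β ∈ B} ⟨h(β), p⟩. -/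
open Finset

/-- Abstract content of Lemma 3.3: for a bounded family `h : B → ℝ^I`, the
convex conjugate of `F(p̄) = inf_{β} max_i (p̄_i − h(β)_i)` at a point `p` of
the standard simplex equals `sup_{β} ⟨h(β), p⟩`. -/
theorem conj_inf_max_eq_sup_inner
    (I : ℕ) (hI : 1 ≤ I) {B : Type*} [Nonempty B]
    (h : B → Fin I → ℝ) (hbd : ∃ C, ∀ β i, |h β i| ≤ C)
    (p : Fin I → ℝ) (hp : p ∈ stdSimplex ℝ (Fin I)) :
    (⨆ pbar : Fin I → ℝ,
        ((∑ i, p i * pbar i) - ⨅ β : B, ⨆ i, (pbar i - h β i)))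
      = ⨆ β : B, ∑ i, h β i * p i := by
  have hne : Nonempty (Fin I) := ⟨⟨0, hI⟩⟩
  obtain ⟨C, hC⟩ := hbd
  obtain ⟨hp0, hp1⟩ := hp
  -- weighted average ≤ sup
  have havg : ∀ x : Fin I → ℝ, ∑ i, p i * x i ≤ ⨆ i, x i := by
    intro x
    calc ∑ i, p i * x i ≤ ∑ i, p i * (⨆ j, x j) := by
          refine Finset.sum_le_sum fun i _ => ?_
          exact mul_le_mul_of_nonneg_left
            (le_ciSup (Set.Finite.bddAbove (Set.finite_range x)) i) (hp0 i)
      _ = (∑ i, p i) * (⨆ j, x j) := by rw [Finset.sum_mul]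
      _ = ⨆ j, x j := by rw [hp1, one_mul]
  -- sup of ∑ h β i * p i is bounded
  have hSub : BddAbove (Set.range fun β : B => ∑ i, h β i * p i) := by
    refine ⟨C, ?_⟩
    rintro _ ⟨β, rfl⟩
    calc ∑ i, h β i * p i ≤ ∑ i, C * p i := by
          refine Finset.sum_le_sum fun i _ => ?_
          exact mul_le_mul_of_nonneg_right ((abs_le.mp (hC β i)).2) (hp0 i)
      _ = C := by rw [← Finset.mul_sum, hp1, mul_one]
  set S : ℝ := ⨆ β : B, ∑ i, h β i * p i with hS
  -- inner infimum bounded below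
  have hBB : ∀ pbar : Fin I → ℝ,
      BddBelow (Set.range fun β : B => ⨆ i, (pbar i - h β i)) := by
    intro pbar
    refine ⟨pbar ⟨0, hI⟩ - C, ?_⟩
    rintro _ ⟨β, rfl⟩
    refine le_trans ?_ (le_ciSup (Set.Finite.bddAbove
      (Set.finite_range fun i => pbar i - h β i)) ⟨0, hI⟩)
    have := (abs_le.mp (hC β ⟨0, hI⟩)).2
    linarith
  -- every term of LHS sup is ≤ S
  have hub : ∀ pbar : Fin I → ℝ,
      (∑ i, p i * pbar i) - ⨅ β : B, ⨆ i, (pbar i - h β i) ≤ S := by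
    intro pbar
    have : (∑ i, p i * pbar i) - S ≤ ⨅ β : B, ⨆ i, (pbar i - h β i) := by
      refine le_ciInf fun β => ?_
      have h1 : ∑ i, p i * (pbar i - h β i) ≤ ⨆ i, (pbar i - h β i) :=
        havg _
      have h2 : ∑ i, p i * (pbar i - h β i)
          = (∑ i, p i * pbar i) - ∑ i, h β i * p i := by
        rw [← Finset.sum_sub_distrib]
        congr 1; ext i; ring
      have h3 : ∑ i, h β i * p i ≤ S := le_ciSup hSub β
      linarith
    linarith
  apply le_antisymm
  · exact ciSup_le hub
  · refine ciSup_le fun β => ?_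
    have hkey : (∑ i, p i * h β i) - ⨅ β' : B, ⨆ i, (h β i - h β' i)
        ≥ ∑ i, h β i * p i := by
      have h0 : (⨅ β' : B, ⨆ i, (h β i - h β' i)) ≤ 0 := by
        refine le_trans (ciInf_le (hBB (h β)) β) ?_
        have : (⨆ i : Fin I, (h β i - h β i)) = 0 := by
          simp
        linarith [this.le]
      have : ∑ i, p i * h β i = ∑ i, h β i * p i := by
        congr 1; ext i; ring
      linarith
    refine le_trans hkey (le_ciSup
      (f := fun pbar : Fin I → ℝ =>
        (∑ i, p i * pbar i) - ⨅ β : B, ⨆ i, (pbar i - h β i)) ?_ (h β))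
    exact ⟨S, by rintro _ ⟨pbar, rfl⟩; exact hub pbar⟩
end

section
/- Let U and V be nonempty compact metric spaces and let g : U × V → ℝ be continuous. For μ ∈ P(U) write g(μ,v) = ∫_U g(u,v) dμ(u) and for ν ∈ P(V) write g(u,ν) = ∫_V g(u,v) dν(v). Then the following two conditions together: (i) inf_{u ∈ U} sup_{ν ∈ P(V)} g(u,ν) = sup_{ν ∈ P(V)} inf_{u ∈ U} g(u,ν), and (ii) sup_{v ∈ V} inf_{μ ∈ P(U)} g(μ,v) = inf_{μ ∈ P(U)} sup_{v ∈ V} g(μ,v), hold if and only if the classical Isaacs condition inf_{u ∈ U} sup_{v ∈ V} g(u,v) = sup_{v ∈ V} inf_{u ∈ U} g(u,v) holds. -/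
open MeasureTheory

/-- For a probability measure, the integral of an integrable function with bounded-above
range is at most the supremum of the function. -/
lemma aux_integral_le_ciSup {X : Type*} [MeasurableSpace X] [Nonempty X]
    (μ : Measure X) [IsProbabilityMeasure μ] {f : X → ℝ}
    (hf : Integrable f μ) (hb : BddAbove (Set.range f)) :
    ∫ x, f x ∂μ ≤ ⨆ x, f x := by
  calc ∫ x, f x ∂μ ≤ ∫ _x, (⨆ x, f x) ∂μ :=
        integral_mono hf (integrable_const _) fun x => le_ciSup hb x
    _ = ⨆ x, f x := by simp

/-- For a probability measure, the integral of an integrable function with bounded-below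
range is at least the infimum of the function. -/
lemma aux_ciInf_le_integral {X : Type*} [MeasurableSpace X] [Nonempty X]
    (μ : Measure X) [IsProbabilityMeasure μ] {f : X → ℝ}
    (hf : Integrable f μ) (hb : BddBelow (Set.range f)) :
    (⨅ x, f x) ≤ ∫ x, f x ∂μ := by
  calc (⨅ x, f x) = ∫ _x, (⨅ x, f x) ∂μ := by simp
    _ ≤ ∫ x, f x ∂μ :=
        integral_mono (integrable_const _) hf fun x => ciInf_le hb x

/-- A continuous function on a compact space is integrable w.r.t. any finite measure. -/
lemma aux_integrable {X : Type*} [TopologicalSpace X] [CompactSpace X]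
    [MeasurableSpace X] [OpensMeasurableSpace X] [T2Space X]
    {f : X → ℝ} (hf : Continuous f) (μ : Measure X) [IsFiniteMeasure μ] :
    Integrable f μ :=
  hf.integrable_of_hasCompactSupport (HasCompactSupport.of_compactSpace f)

/-- Remark 4.1: the two mixed Isaacs conditions (4.1) and (4.2) hold jointly
if and only if the classical Isaacs condition (4.3) holds. -/
theorem mixed_isaacs_iff_classical_isaacs
    {U V : Type*} [MetricSpace U] [CompactSpace U] [Nonempty U]
    [MeasurableSpace U] [BorelSpace U]
    [MetricSpace V] [CompactSpace V] [Nonempty V]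
    [MeasurableSpace V] [BorelSpace V]
    (g : U → V → ℝ) (hg : Continuous fun q : U × V => g q.1 q.2) :
    ((⨅ u, ⨆ ν : ProbabilityMeasure V, ∫ v, g u v ∂(ν : Measure V))
        = (⨆ ν : ProbabilityMeasure V, ⨅ u, ∫ v, g u v ∂(ν : Measure V))
      ∧ (⨆ v, ⨅ μ : ProbabilityMeasure U, ∫ u, g u v ∂(μ : Measure U))
        = (⨅ μ : ProbabilityMeasure U, ⨆ v, ∫ u, g u v ∂(μ : Measure U)))
    ↔ (⨅ u, ⨆ v, g u v) = (⨆ v, ⨅ u, g u v) := by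
  -- continuity of sections
  have hgu : ∀ u, Continuous (g u) := fun u => hg.comp (Continuous.prodMk_right u)
  have hgv : ∀ v, Continuous (fun u => g u v) := fun v =>
    hg.comp (continuous_id.prodMk continuous_const)
  -- a uniform bound
  obtain ⟨C, hC⟩ := (isCompact_range hg.abs).bddAbove
  have hb : ∀ u v, |g u v| ≤ C := fun u v => hC (Set.mem_range_self (u, v))
  have hble : ∀ u v, g u v ≤ C := fun u v => (abs_le.1 (hb u v)).2
  have hbge : ∀ u v, -C ≤ g u v := fun u v => (abs_le.1 (hb u v)).1
  -- Dirac measures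
  let dirU : U → ProbabilityMeasure U := fun u => ⟨Measure.dirac u, inferInstance⟩
  let dirV : V → ProbabilityMeasure V := fun v => ⟨Measure.dirac v, inferInstance⟩
  haveI : Nonempty (ProbabilityMeasure U) := ⟨dirU (Classical.arbitrary U)⟩
  haveI : Nonempty (ProbabilityMeasure V) := ⟨dirV (Classical.arbitrary V)⟩
  -- basic boundedness of ranges
  have hbAu : ∀ u, BddAbove (Set.range (g u)) := fun u =>
    ⟨C, by rintro _ ⟨v, rfl⟩; exact hble u v⟩
  have hbBu : ∀ u, BddBelow (Set.range (g u)) := fun u =>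
    ⟨-C, by rintro _ ⟨v, rfl⟩; exact hbge u v⟩
  have hbAv : ∀ v, BddAbove (Set.range fun u => g u v) := fun v =>
    ⟨C, by rintro _ ⟨u, rfl⟩; exact hble u v⟩
  have hbBv : ∀ v, BddBelow (Set.range fun u => g u v) := fun v =>
    ⟨-C, by rintro _ ⟨u, rfl⟩; exact hbge u v⟩
  -- bounds on integrals
  have hintV : ∀ u (ν : ProbabilityMeasure V), |∫ v, g u v ∂(ν : Measure V)| ≤ C := by
    intro u ν
    rw [abs_le]
    constructor
    · refine le_trans ?_ (aux_ciInf_le_integral _ (aux_integrable (hgu u) _) (hbBu u))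
      exact le_ciInf fun v => hbge u v
    · refine le_trans (aux_integral_le_ciSup _ (aux_integrable (hgu u) _) (hbAu u)) ?_
      exact ciSup_le fun v => hble u v
  have hintU : ∀ v (μ : ProbabilityMeasure U), |∫ u, g u v ∂(μ : Measure U)| ≤ C := by
    intro v μ
    rw [abs_le]
    constructor
    · refine le_trans ?_ (aux_ciInf_le_integral _ (aux_integrable (hgv v) _) (hbBv v))
      exact le_ciInf fun u => hbge u v
    · refine le_trans (aux_integral_le_ciSup _ (aux_integrable (hgv v) _) (hbAv v)) ?_
      exact ciSup_le fun u => hble u v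
  -- boundedness of various ranges
  have hbIntV : ∀ u, BddAbove (Set.range fun ν : ProbabilityMeasure V =>
      ∫ v, g u v ∂(ν : Measure V)) := fun u =>
    ⟨C, by rintro _ ⟨ν, rfl⟩; exact (abs_le.1 (hintV u ν)).2⟩
  have hbIntVbelow : ∀ (ν : ProbabilityMeasure V),
      BddBelow (Set.range fun u => ∫ v, g u v ∂(ν : Measure V)) := fun ν =>
    ⟨-C, by rintro _ ⟨u, rfl⟩; exact (abs_le.1 (hintV u ν)).1⟩
  have hbIntUbelow : ∀ v, BddBelow (Set.range fun μ : ProbabilityMeasure U =>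
      ∫ u, g u v ∂(μ : Measure U)) := fun v =>
    ⟨-C, by rintro _ ⟨μ, rfl⟩; exact (abs_le.1 (hintU v μ)).1⟩
  have hbIntUabove : ∀ (μ : ProbabilityMeasure U),
      BddAbove (Set.range fun v => ∫ u, g u v ∂(μ : Measure U)) := fun μ =>
    ⟨C, by rintro _ ⟨v, rfl⟩; exact (abs_le.1 (hintU v μ)).2⟩
  -- Dirac integrals
  have hdirV : ∀ u v, ∫ w, g u w ∂((dirV v : ProbabilityMeasure V) : Measure V) = g u v := by
    intro u v
    exact integral_dirac (g u) v
  have hdirU : ∀ u v, ∫ w, g w v ∂((dirU u : ProbabilityMeasure U) : Measure U) = g u v := by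
    intro u v
    exact integral_dirac (fun w => g w v) u
  -- step 1: for each u, sup over mixed strategies equals sup over pure strategies
  have step1 : ∀ u, (⨆ ν : ProbabilityMeasure V, ∫ v, g u v ∂(ν : Measure V))
      = ⨆ v, g u v := by
    intro u
    apply le_antisymm
    · exact ciSup_le fun ν => aux_integral_le_ciSup _ (aux_integrable (hgu u) _) (hbAu u)
    · refine ciSup_le fun v => ?_
      rw [← hdirV u v]
      exact le_ciSup (hbIntV u) (dirV v)
  -- step 2: for each v, inf over mixed strategies equals inf over pure strategies
  have step2 : ∀ v, (⨅ μ : ProbabilityMeasure U, ∫ u, g u v ∂(μ : Measure U))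
      = ⨅ u, g u v := by
    intro v
    apply le_antisymm
    · refine le_ciInf fun u => ?_
      rw [← hdirU u v]
      exact ciInf_le (hbIntUbelow v) (dirU u)
    · exact le_ciInf fun μ => aux_ciInf_le_integral _ (aux_integrable (hgv v) _) (hbBv v)
  -- notation
  set A : ℝ := ⨅ u, ⨆ v, g u v with hA
  set B : ℝ := ⨆ v, ⨅ u, g u v with hB
  set S1 : ℝ := ⨆ ν : ProbabilityMeasure V, ⨅ u, ∫ v, g u v ∂(ν : Measure V) with hS1
  set I2 : ℝ := ⨅ μ : ProbabilityMeasure U, ⨆ v, ∫ u, g u v ∂(μ : Measure U) with hI2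
  have hLHS1 : (⨅ u, ⨆ ν : ProbabilityMeasure V, ∫ v, g u v ∂(ν : Measure V)) = A :=
    iInf_congr step1
  have hLHS2 : (⨆ v, ⨅ μ : ProbabilityMeasure U, ∫ u, g u v ∂(μ : Measure U)) = B :=
    iSup_congr step2
  -- h1 : S1 ≤ A
  have h1 : S1 ≤ A := by
    refine ciSup_le fun ν => le_ciInf fun u => ?_
    exact (ciInf_le (hbIntVbelow ν) u).trans
      (aux_integral_le_ciSup _ (aux_integrable (hgu u) _) (hbAu u))
  -- h2 : B ≤ I2
  have h2 : B ≤ I2 := by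
    refine le_ciInf fun μ => ciSup_le fun v => ?_
    exact (aux_ciInf_le_integral _ (aux_integrable (hgv v) _) (hbBv v)).trans
      (le_ciSup (hbIntUabove μ) v)
  -- h4 : B ≤ S1
  have h4 : B ≤ S1 := by
    refine ciSup_le fun v => ?_
    have : (⨅ u, g u v) = ⨅ u, ∫ w, g u w ∂((dirV v : ProbabilityMeasure V) : Measure V) :=
      iInf_congr fun u => (hdirV u v).symm
    rw [this]
    refine le_ciSup (f := fun ν : ProbabilityMeasure V => ⨅ u, ∫ w, g u w ∂(ν : Measure V))
      ⟨C, ?_⟩ (dirV v)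
    rintro _ ⟨ν, rfl⟩
    exact (ciInf_le (hbIntVbelow ν) (Classical.arbitrary U)).trans
      (abs_le.1 (hintV (Classical.arbitrary U) ν)).2
  -- h5 : I2 ≤ A
  have h5 : I2 ≤ A := by
    refine le_ciInf fun u => ?_
    have : (⨆ v, g u v) = ⨆ v, ∫ w, g w v ∂((dirU u : ProbabilityMeasure U) : Measure U) :=
      iSup_congr fun v => (hdirU u v).symm
    rw [this]
    refine ciInf_le (f := fun μ : ProbabilityMeasure U => ⨆ v, ∫ w, g w v ∂(μ : Measure U))
      ⟨-C, ?_⟩ (dirU u)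
    rintro _ ⟨μ, rfl⟩
    exact le_trans (abs_le.1 (hintU (Classical.arbitrary V) μ)).1
      (le_ciSup (hbIntUabove μ) (Classical.arbitrary V))
  -- h6 : B ≤ A (weak duality)
  have h6 : B ≤ A := by
    refine ciSup_le fun v => le_ciInf fun u => ?_
    exact (ciInf_le (hbBv v) u).trans (le_ciSup (hbAu u) v)
  -- h3 : S1 ≤ I2 (weak duality through mixed strategies, using Fubini)
  have h3 : S1 ≤ I2 := by
    refine ciSup_le fun ν => le_ciInf fun μ => ?_
    have hprod : Integrable (fun q : U × V => g q.1 q.2)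
        ((μ : Measure U).prod (ν : Measure V)) := aux_integrable hg _
    have hi1 : Integrable (fun u => ∫ v, g u v ∂(ν : Measure V)) (μ : Measure U) :=
      hprod.integral_prod_left
    have hi2 : Integrable (fun v => ∫ u, g u v ∂(μ : Measure U)) (ν : Measure V) :=
      hprod.integral_prod_right
    calc (⨅ u, ∫ v, g u v ∂(ν : Measure V))
        ≤ ∫ u, (∫ v, g u v ∂(ν : Measure V)) ∂(μ : Measure U) :=
          aux_ciInf_le_integral _ hi1 (hbIntVbelow ν)
      _ = ∫ v, (∫ u, g u v ∂(μ : Measure U)) ∂(ν : Measure V) :=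
          integral_integral_swap hprod
      _ ≤ ⨆ v, ∫ u, g u v ∂(μ : Measure U) :=
          aux_integral_le_ciSup _ hi2 (hbIntUabove μ)
  constructor
  · rintro ⟨e1, e2⟩
    rw [hLHS1] at e1
    rw [hLHS2] at e2
    refine le_antisymm ?_ h6
    calc A = S1 := e1
      _ ≤ I2 := h3
      _ = B := e2.symm
  · intro hAB
    constructor
    · rw [hLHS1]
      refine le_antisymm ?_ h1
      calc A = B := hAB
        _ ≤ S1 := h4
    · rw [hLHS2]
      refine le_antisymm h2 ?_
      calc I2 ≤ A := h5
        _ = B := hAB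
end

section
/- For every p ∈ ℝ: sup over Borel probability measures ν on [−1,1] of the infimum over Borel probability measures μ on [−1,1] of ∫∫ (u − v)²·p dμ(u) dν(v) equals p, and likewise the infimum over μ of the supremum over ν of ∫∫ (u − v)²·p dμ(u) dν(v) equals p. In particular these two relaxed Hamiltonians coincide for every p ∈ ℝ. -/
open MeasureTheory

section RHX

lemma rhx_ae_mem_Icc {μ : Measure ℝ} (h : μ (Set.Icc (-1:ℝ) 1)ᶜ = 0) :
    ∀ᵐ x ∂μ, x ∈ Set.Icc (-1:ℝ) 1 := by
  rw [ae_iff]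
  have : {x | ¬ x ∈ Set.Icc (-1:ℝ) 1} = (Set.Icc (-1:ℝ) 1)ᶜ := rfl
  rw [this, h]

lemma rhx_integ {μ : Measure ℝ} [IsFiniteMeasure μ] (h : μ (Set.Icc (-1:ℝ) 1)ᶜ = 0)
    {f : ℝ → ℝ} (hf : Continuous f) : Integrable f μ := by
  obtain ⟨C, hC⟩ := isCompact_Icc.exists_bound_of_continuousOn
    (f := f) (s := Set.Icc (-1:ℝ) 1) hf.continuousOn
  exact ⟨hf.aestronglyMeasurable,
    HasFiniteIntegral.of_bounded ((rhx_ae_mem_Icc h).mono fun x hx => hC x hx)⟩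

lemma rhx_mono {μ : Measure ℝ} [IsFiniteMeasure μ] (h : μ (Set.Icc (-1:ℝ) 1)ᶜ = 0)
    {f g : ℝ → ℝ} (hf : Continuous f) (hg : Continuous g)
    (hle : ∀ x ∈ Set.Icc (-1:ℝ) 1, f x ≤ g x) : ∫ x, f x ∂μ ≤ ∫ x, g x ∂μ :=
  integral_mono_ae (rhx_integ h hf) (rhx_integ h hg)
    ((rhx_ae_mem_Icc h).mono fun x hx => hle x hx)

lemma rhx_quad {μ : Measure ℝ} [IsProbabilityMeasure μ] (h : μ (Set.Icc (-1:ℝ) 1)ᶜ = 0)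
    (a b c : ℝ) :
    ∫ x, (a * x ^ 2 + b * x + c) ∂μ = a * (∫ x, x ^ 2 ∂μ) + b * (∫ x, x ∂μ) + c := by
  have h2 : Integrable (fun x : ℝ => a * x ^ 2) μ := rhx_integ h (by fun_prop)
  have h1 : Integrable (fun x : ℝ => b * x) μ := rhx_integ h (by fun_prop)
  have h21 : Integrable (fun x : ℝ => a * x ^ 2 + b * x) μ := rhx_integ h (by fun_prop)
  rw [integral_add h21 (integrable_const c), integral_add h2 h1,
    integral_const_mul, integral_const_mul, integral_const]
  simp

lemma rhx_m2_nonneg {μ : Measure ℝ} : 0 ≤ ∫ x, x ^ 2 ∂μ :=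
  integral_nonneg fun x => sq_nonneg x

lemma rhx_m2_le_one {μ : Measure ℝ} [IsProbabilityMeasure μ]
    (h : μ (Set.Icc (-1:ℝ) 1)ᶜ = 0) : ∫ x, x ^ 2 ∂μ ≤ 1 := by
  have := rhx_mono h (f := fun x => x ^ 2) (g := fun _ => 1) (by fun_prop) (by fun_prop)
    (fun x hx => by obtain ⟨h1, h2⟩ := hx; show x ^ 2 ≤ (1:ℝ); nlinarith)
  simpa using this

lemma rhx_m1_abs {μ : Measure ℝ} [IsProbabilityMeasure μ]
    (h : μ (Set.Icc (-1:ℝ) 1)ᶜ = 0) : |∫ x, x ∂μ| ≤ 1 := by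
  rw [abs_le]
  constructor
  · have := rhx_mono h (f := fun _ : ℝ => (-1:ℝ)) (g := fun x => x) (by fun_prop)
      (by fun_prop) (fun x hx => hx.1)
    simpa using this
  · have := rhx_mono h (f := fun x : ℝ => x) (g := fun _ => (1:ℝ)) (by fun_prop)
      (by fun_prop) (fun x hx => hx.2)
    simpa using this

/-- The closed form of the relaxed payoff in terms of moments. -/
lemma rhx_F_eq (p : ℝ) {μ ν : Measure ℝ} [IsProbabilityMeasure μ] [IsProbabilityMeasure ν]
    (hμ : μ (Set.Icc (-1:ℝ) 1)ᶜ = 0) (hν : ν (Set.Icc (-1:ℝ) 1)ᶜ = 0) :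
    ∫ v, (∫ u, (u - v) ^ 2 * p ∂μ) ∂ν
      = p * (∫ u, u ^ 2 ∂μ) - 2 * p * (∫ u, u ∂μ) * (∫ v, v ∂ν)
        + p * (∫ v, v ^ 2 ∂ν) := by
  have hinner : ∀ v : ℝ, (∫ u, (u - v) ^ 2 * p ∂μ)
      = p * v ^ 2 + (-2 * p * (∫ u, u ∂μ)) * v + p * (∫ u, u ^ 2 ∂μ) := by
    intro v
    have he : (fun u : ℝ => (u - v) ^ 2 * p)
        = fun u => p * u ^ 2 + (-2 * p * v) * u + p * v ^ 2 := by
      funext u; ring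
    rw [he, rhx_quad hμ]
    ring
  have he2 : (fun v : ℝ => ∫ u, (u - v) ^ 2 * p ∂μ)
      = fun v => p * v ^ 2 + (-2 * p * (∫ u, u ∂μ)) * v + p * (∫ u, u ^ 2 ∂μ) :=
    funext hinner
  rw [he2, rhx_quad hν]
  ring

end RHX

/-- The relaxed Hamiltonians of the concluding example: for every `p ∈ ℝ`,
`sup_ν inf_μ ∫∫ (u−v)²p dμ dν = p = inf_μ sup_ν ∫∫ (u−v)²p dμ dν`, the
suprema/infima running over Borel probability measures on `[−1,1]`. -/
theorem relaxed_hamiltonians_example (p : ℝ) :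
    (⨆ ν : {ν : Measure ℝ // IsProbabilityMeasure ν ∧ ν (Set.Icc (-1:ℝ) 1)ᶜ = 0},
      ⨅ μ : {μ : Measure ℝ // IsProbabilityMeasure μ ∧ μ (Set.Icc (-1:ℝ) 1)ᶜ = 0},
        ∫ v, (∫ u, (u - v) ^ 2 * p ∂(μ : Measure ℝ)) ∂(ν : Measure ℝ)) = p
    ∧ (⨅ μ : {μ : Measure ℝ // IsProbabilityMeasure μ ∧ μ (Set.Icc (-1:ℝ) 1)ᶜ = 0},
      ⨆ ν : {ν : Measure ℝ // IsProbabilityMeasure ν ∧ ν (Set.Icc (-1:ℝ) 1)ᶜ = 0},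
        ∫ v, (∫ u, (u - v) ^ 2 * p ∂(μ : Measure ℝ)) ∂(ν : Measure ℝ)) = p := by
  classical
  set P := {μ : Measure ℝ // IsProbabilityMeasure μ ∧ μ (Set.Icc (-1:ℝ) 1)ᶜ = 0} with hP
  -- witnesses
  have hd0c : (Measure.dirac (0:ℝ)) (Set.Icc (-1:ℝ) 1)ᶜ = 0 := by
    rw [Measure.dirac_apply' _ measurableSet_Icc.compl]
    simp
  have hd1c : (Measure.dirac (1:ℝ)) (Set.Icc (-1:ℝ) 1)ᶜ = 0 := by
    rw [Measure.dirac_apply' _ measurableSet_Icc.compl]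
    simp
  have hdm1c : (Measure.dirac (-1:ℝ)) (Set.Icc (-1:ℝ) 1)ᶜ = 0 := by
    rw [Measure.dirac_apply' _ measurableSet_Icc.compl]
    simp
  set σ : Measure ℝ := (2:ENNReal)⁻¹ • Measure.dirac (-1) + (2:ENNReal)⁻¹ • Measure.dirac 1
    with hσdef
  have hσp : IsProbabilityMeasure σ := by
    constructor
    simp [hσdef, ENNReal.inv_two_add_inv_two]
  have hσc : σ (Set.Icc (-1:ℝ) 1)ᶜ = 0 := by
    simp [hσdef, hd1c, hdm1c]
  have hintd : ∀ (f : ℝ → ℝ), Continuous f → ∀ a : ℝ, Integrable f (Measure.dirac a) := by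
    intro f hf a
    refine ⟨hf.aestronglyMeasurable, ?_⟩
    simp [HasFiniteIntegral, lintegral_dirac]
  have hintσ : ∀ (f : ℝ → ℝ), Continuous f → ∫ x, f x ∂σ = (f (-1) + f 1) / 2 := by
    intro f hf
    rw [hσdef, integral_add_measure ((hintd f hf (-1)).smul_measure (by simp))
      ((hintd f hf 1).smul_measure (by simp)),
      integral_smul_measure, integral_smul_measure, integral_dirac, integral_dirac]
    simp [smul_eq_mul]
    ring
  let D0 : P := ⟨Measure.dirac 0, Measure.dirac.isProbabilityMeasure, hd0c⟩
  let Sg : P := ⟨σ, hσp, hσc⟩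
  haveI : Nonempty P := ⟨D0⟩
  -- moments
  have hm1D0 : ∫ x, x ∂(D0 : Measure ℝ) = 0 := by
    show ∫ x, x ∂(Measure.dirac (0:ℝ)) = 0
    rw [integral_dirac]
  have hm2D0 : ∫ x, x ^ 2 ∂(D0 : Measure ℝ) = 0 := by
    show ∫ x, x ^ 2 ∂(Measure.dirac (0:ℝ)) = 0
    rw [integral_dirac]
    norm_num
  have hm1Sg : ∫ x, x ∂(Sg : Measure ℝ) = 0 := by
    show ∫ x, x ∂σ = 0
    have h := hintσ (fun x => x) (by fun_prop)
    norm_num at h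
    exact h
  have hm2Sg : ∫ x, x ^ 2 ∂(Sg : Measure ℝ) = 1 := by
    show ∫ x, x ^ 2 ∂σ = 1
    have h := hintσ (fun x => x ^ 2) (by fun_prop)
    norm_num at h
    exact h
  -- closed form
  have key : ∀ μ ν : P, ∫ v, (∫ u, (u - v) ^ 2 * p ∂(μ : Measure ℝ)) ∂(ν : Measure ℝ)
      = p * (∫ u, u ^ 2 ∂(μ : Measure ℝ))
        - 2 * p * (∫ u, u ∂(μ : Measure ℝ)) * (∫ v, v ∂(ν : Measure ℝ))
        + p * (∫ v, v ^ 2 ∂(ν : Measure ℝ)) := by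
    intro μ ν
    haveI := μ.2.1; haveI := ν.2.1
    exact rhx_F_eq p μ.2.2 ν.2.2
  -- abbreviation for closed form
  set G : P → P → ℝ := fun μ ν =>
    p * (∫ u, u ^ 2 ∂(μ : Measure ℝ))
      - 2 * p * (∫ u, u ∂(μ : Measure ℝ)) * (∫ v, v ∂(ν : Measure ℝ))
      + p * (∫ v, v ^ 2 ∂(ν : Measure ℝ)) with hG
  -- moment bounds for arbitrary elements of P
  have hm2b : ∀ μ : P, 0 ≤ ∫ x, x ^ 2 ∂(μ : Measure ℝ) ∧ ∫ x, x ^ 2 ∂(μ : Measure ℝ) ≤ 1 := by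
    intro μ
    haveI := μ.2.1
    exact ⟨rhx_m2_nonneg, rhx_m2_le_one μ.2.2⟩
  have hm1b : ∀ μ : P, |∫ x, x ∂(μ : Measure ℝ)| ≤ 1 := by
    intro μ
    haveI := μ.2.1
    exact rhx_m1_abs μ.2.2
  -- global bound |G μ ν| ≤ 4|p|
  have hGb : ∀ μ ν : P, |G μ ν| ≤ 4 * |p| := by
    intro μ ν
    have h2μ := hm2b μ; have h2ν := hm2b ν
    have h1μ := hm1b μ; have h1ν := hm1b ν
    have e1 : |p * (∫ u, u ^ 2 ∂(μ : Measure ℝ))| ≤ |p| := by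
      rw [abs_mul]
      nlinarith [abs_nonneg p, abs_nonneg (∫ u, u ^ 2 ∂(μ : Measure ℝ)),
        abs_le.mpr ⟨by linarith [h2μ.1], h2μ.2⟩]
    have e3 : |p * (∫ v, v ^ 2 ∂(ν : Measure ℝ))| ≤ |p| := by
      rw [abs_mul]
      nlinarith [abs_nonneg p, abs_nonneg (∫ v, v ^ 2 ∂(ν : Measure ℝ)),
        abs_le.mpr ⟨by linarith [h2ν.1], h2ν.2⟩]
    have e2 : |2 * p * (∫ u, u ∂(μ : Measure ℝ)) * (∫ v, v ∂(ν : Measure ℝ))| ≤ 2 * |p| := by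
      rw [abs_mul, abs_mul, abs_mul]
      simp only [abs_two]
      have hmm : |∫ u, u ∂(μ : Measure ℝ)| * |∫ v, v ∂(ν : Measure ℝ)| ≤ 1 :=
        mul_le_one₀ h1μ (abs_nonneg _) h1ν
      calc 2 * |p| * |∫ u, u ∂(μ : Measure ℝ)| * |∫ v, v ∂(ν : Measure ℝ)|
          = 2 * |p| * (|∫ u, u ∂(μ : Measure ℝ)| * |∫ v, v ∂(ν : Measure ℝ)|) := by ring
        _ ≤ 2 * |p| * 1 := mul_le_mul_of_nonneg_left hmm (by positivity)
        _ = 2 * |p| := by ring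
    calc |G μ ν| ≤ |p * (∫ u, u ^ 2 ∂(μ : Measure ℝ))|
          + |2 * p * (∫ u, u ∂(μ : Measure ℝ)) * (∫ v, v ∂(ν : Measure ℝ))|
          + |p * (∫ v, v ^ 2 ∂(ν : Measure ℝ))| := by
            rw [hG]
            exact (abs_add_le _ _).trans (by gcongr; exact abs_sub _ _)
      _ ≤ 4 * |p| := by linarith
  -- evaluations at witnesses
  have hGD0l : ∀ ν : P, G D0 ν = p * (∫ v, v ^ 2 ∂(ν : Measure ℝ)) := by
    intro ν; rw [hG]; simp only [hm1D0, hm2D0]; ring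
  have hGSgl : ∀ ν : P, G Sg ν = p + p * (∫ v, v ^ 2 ∂(ν : Measure ℝ)) := by
    intro ν; rw [hG]; simp only [hm1Sg, hm2Sg]; ring
  have hGD0r : ∀ μ : P, G μ D0 = p * (∫ u, u ^ 2 ∂(μ : Measure ℝ)) := by
    intro μ; rw [hG]; simp only [hm1D0, hm2D0]; ring
  have hGSgr : ∀ μ : P, G μ Sg = p * (∫ u, u ^ 2 ∂(μ : Measure ℝ)) + p := by
    intro μ; rw [hG]; simp only [hm1Sg, hm2Sg]; ring
  -- part 1 : sup inf = p
  have hub : ∀ ν : P, (⨅ μ : P, G μ ν) ≤ p := by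
    intro ν
    have hbdd : BddBelow (Set.range fun μ : P => G μ ν) := by
      refine ⟨-(4 * |p|), ?_⟩
      rintro x ⟨μ, rfl⟩
      have := hGb μ ν
      rw [abs_le] at this
      linarith [this.1]
    rcases le_or_gt 0 p with hp | hp
    · refine ciInf_le_of_le hbdd D0 ?_
      rw [hGD0l]
      nlinarith [(hm2b ν).1, (hm2b ν).2]
    · refine ciInf_le_of_le hbdd Sg ?_
      rw [hGSgl]
      nlinarith [(hm2b ν).1]
  have part1 : (⨆ ν : P, ⨅ μ : P, G μ ν) = p := by
    refine le_antisymm (ciSup_le hub) ?_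
    have hba : BddAbove (Set.range fun ν : P => ⨅ μ : P, G μ ν) := by
      refine ⟨p, ?_⟩
      rintro x ⟨ν, rfl⟩
      exact hub ν
    rcases le_or_gt 0 p with hp | hp
    · refine le_ciSup_of_le hba Sg (le_ciInf fun μ => ?_)
      rw [hGSgr]
      nlinarith [(hm2b μ).1]
    · refine le_ciSup_of_le hba D0 (le_ciInf fun μ => ?_)
      rw [hGD0r]
      nlinarith [(hm2b μ).2]
  -- part 2 : inf sup = p
  have hlb : ∀ μ : P, p ≤ ⨆ ν : P, G μ ν := by
    intro μ
    have hbdd : BddAbove (Set.range fun ν : P => G μ ν) := by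
      refine ⟨4 * |p|, ?_⟩
      rintro x ⟨ν, rfl⟩
      have := hGb μ ν
      rw [abs_le] at this
      linarith [this.2]
    rcases le_or_gt 0 p with hp | hp
    · refine le_ciSup_of_le hbdd Sg ?_
      rw [hGSgr]
      nlinarith [(hm2b μ).1]
    · refine le_ciSup_of_le hbdd D0 ?_
      rw [hGD0r]
      nlinarith [(hm2b μ).2]
  have part2 : (⨅ μ : P, ⨆ ν : P, G μ ν) = p := by
    refine le_antisymm ?_ (le_ciInf hlb)
    have hbb : BddBelow (Set.range fun μ : P => ⨆ ν : P, G μ ν) := by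
      refine ⟨p, ?_⟩
      rintro x ⟨μ, rfl⟩
      exact hlb μ
    rcases le_or_gt 0 p with hp | hp
    · refine ciInf_le_of_le hbb D0 (ciSup_le fun ν => ?_)
      rw [hGD0l]
      nlinarith [(hm2b ν).1, (hm2b ν).2]
    · refine ciInf_le_of_le hbb Sg (ciSup_le fun ν => ?_)
      rw [hGSgl]
      nlinarith [(hm2b ν).1]
  constructor
  · rw [show (⨆ ν : P, ⨅ μ : P,
        ∫ v, (∫ u, (u - v) ^ 2 * p ∂(μ : Measure ℝ)) ∂(ν : Measure ℝ))
        = ⨆ ν : P, ⨅ μ : P, G μ ν from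
      congrArg _ (funext fun ν => congrArg _ (funext fun μ => key μ ν))]
    exact part1
  · rw [show (⨅ μ : P, ⨆ ν : P,
        ∫ v, (∫ u, (u - v) ^ 2 * p ∂(μ : Measure ℝ)) ∂(ν : Measure ℝ))
        = ⨅ μ : P, ⨆ ν : P, G μ ν from
      congrArg _ (funext fun μ => congrArg _ (funext fun ν => key μ ν))]
    exact part2
end
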